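/- arXiv:2105.04487 — 5 statements merged into one kernel-verified Lean document; each statement's English description precedes it below -/
import Mathlib

section
/- For any α ∈ S_{2t} and any β ∈ S_{2t} such that β(x) ⊕ x = 1 mod 2 for all x (β swaps parities), the number of cycles of βα is at most t + T(α), where T(α) is the minimum number of transpositions expressing α. -/
/-- The number of cycles (orbits, including fixed points) of a permutation of `Fin n`. -/
noncomputable def cycleCount {n : ℕ} (σ : Equiv.Perm (Fin n)) : ℕ :=
  Nat.card (MulAction.orbitRel.Quotient (Subgroup.zpowers σ) (Fin n))

/-- The minimum number of transpositions whose product is `σ`. -/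
noncomputable def transCount {n : ℕ} (σ : Equiv.Perm (Fin n)) : ℕ :=
  sInf {k | ∃ l : List (Equiv.Perm (Fin n)),
    l.length = k ∧ (∀ τ ∈ l, τ.IsSwap) ∧ l.prod = σ}


/-!
A permutation of `2t` points without fixed points has at most `t` cycles. Right multiplication
by a transposition `(a b)` raises the number of cycles by at most one: every cycle of
`σ * (a b)` lies in a cycle of `σ` or in the union of the cycles of `a` and `b`, so
`σ * (a b)` has at most one cycle fewer than `σ`, and since `(a b)` is an involution the
same bound holds with the roles of `σ` and `σ * (a b)` exchanged. Writing `α` as a product of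
`T(α)` transpositions gives `c(βα) ≤ c(β) + T(α) ≤ t + T(α)`.
-/

namespace Setoid

variable {α : Type*}

def mergeClasses (r : Setoid α) (a b : α) : Setoid α where
  r x y := r x y ∨ (r x a ∧ r b y) ∨ (r x b ∧ r a y)
  iseqv := by
    have hs : ∀ {x y}, r x y → r y x := r.symm
    have ht : ∀ {x y z}, r x y → r y z → r x z := r.trans
    exact ⟨fun x => Or.inl (r.refl x), by grind, by grind⟩

theorem le_mergeClasses (r : Setoid α) (a b : α) : r ≤ r.mergeClasses a b :=
  fun _ _ h => Or.inl h

theorem card_quotient_le_of_le {r s : Setoid α} [Finite (Quotient r)] (h : r ≤ s) :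
    Nat.card (Quotient s) ≤ Nat.card (Quotient r) :=
  Nat.card_le_card_of_surjective _ (Quotient.map_surjective (f := id) h Function.surjective_id)

theorem card_quotient_le_card_quotient_mergeClasses_add_one [Finite α] (r : Setoid α) (a b : α) :
    Nat.card (Quotient r) ≤ Nat.card (Quotient (r.mergeClasses a b)) + 1 := by
  classical
  let f : Quotient r → Option (Quotient (r.mergeClasses a b)) := fun q =>
    if q = ⟦a⟧ then none else some (Quotient.map id (r.le_mergeClasses a b) q)
  have hf : Function.Injective f := by
    intro q₁ q₂ h
    induction q₁ using Quotient.inductionOn with | h x => ?_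
    induction q₂ using Quotient.inductionOn with | h y => ?_
    by_cases hx : (⟦x⟧ : Quotient r) = ⟦a⟧ <;>
      by_cases hy : (⟦y⟧ : Quotient r) = ⟦a⟧
    all_goals simp only [f, hx, hy, if_true, if_false, reduceCtorEq, Option.some_inj] at h
    · rw [hx, hy]
    rcases Quotient.exact h with hxy | ⟨hxa, -⟩ | ⟨-, hay⟩
    · exact Quotient.sound hxy
    · exact absurd (Quotient.sound hxa) hx
    · exact absurd (Quotient.sound (r.symm hay)) hy
  simpa [Finite.card_option] using Nat.card_le_card_of_injective f hf

end Setoid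

namespace Equiv.Perm

variable {α : Type*}

theorem orbitRel_zpowers_eq (σ : Perm α) :
    MulAction.orbitRel (Subgroup.zpowers σ) α = SameCycle.setoid σ := by
  ext x y
  rw [MulAction.orbitRel_apply, MulAction.mem_orbit_iff]
  constructor
  · rintro ⟨⟨g, k, rfl⟩, rfl⟩
    exact ⟨-k, by simp [Subgroup.smul_def]⟩
  · rintro ⟨k, rfl⟩
    exact ⟨⟨σ ^ (-k), -k, rfl⟩, by simp [Subgroup.smul_def]⟩

theorem SameCycle.setoid_le_of_forall_apply (σ : Perm α) (s : Setoid α) (h : ∀ z, s (σ z) z) :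
    SameCycle.setoid σ ≤ s := by
  rintro x _ ⟨i, rfl⟩
  refine s.symm ?_
  induction i using Int.induction_on generalizing x with
  | zero => exact s.refl x
  | succ i ih => simpa [zpow_add_one] using s.trans (ih (x := σ x)) (h x)
  | pred i ih =>
    have h' : s (σ⁻¹ x) x := s.symm (by simpa using h (σ⁻¹ x))
    simpa [sub_eq_add_neg, zpow_add] using s.trans (ih (x := σ⁻¹ x)) h'

theorem sameCycle_setoid_mul_swap_le (σ : Perm α) (a b : α) [DecidableEq α] :
    SameCycle.setoid (σ * swap a b) ≤ (SameCycle.setoid σ).mergeClasses a b := by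
  refine SameCycle.setoid_le_of_forall_apply _ _ fun z => ?_
  have hσ (w : α) : σ.SameCycle (σ w) w := sameCycle_apply_left.2 (SameCycle.refl σ w)
  change σ.SameCycle _ z ∨ (σ.SameCycle _ a ∧ σ.SameCycle b z) ∨
    (σ.SameCycle _ b ∧ σ.SameCycle a z)
  by_cases ha : z = a
  · subst ha
    exact Or.inr (Or.inr ⟨by simpa only [mul_apply, swap_apply_left] using hσ b, .rfl⟩)
  by_cases hb : z = b
  · subst hb
    exact Or.inr (Or.inl ⟨by simpa only [mul_apply, swap_apply_right] using hσ a, .rfl⟩)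
  exact Or.inl (by simpa only [mul_apply, swap_apply_of_ne_of_ne ha hb] using hσ z)

variable [Finite α]

theorem card_quotient_sameCycle_le_mul_swap_add_one (σ : Perm α) (a b : α) [DecidableEq α] :
    Nat.card (Quotient (SameCycle.setoid σ)) ≤
      Nat.card (Quotient (SameCycle.setoid (σ * swap a b))) + 1 :=
  ((SameCycle.setoid σ).card_quotient_le_card_quotient_mergeClasses_add_one a b).trans
    (Nat.add_le_add_right (Setoid.card_quotient_le_of_le (sameCycle_setoid_mul_swap_le σ a b)) 1)

theorem card_quotient_sameCycle_mul_swap_le (σ : Perm α) (a b : α) [DecidableEq α] :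
    Nat.card (Quotient (SameCycle.setoid (σ * swap a b))) ≤
      Nat.card (Quotient (SameCycle.setoid σ)) + 1 := by
  simpa [mul_assoc] using card_quotient_sameCycle_le_mul_swap_add_one (σ * swap a b) a b

theorem card_quotient_sameCycle_mul_prod_le [DecidableEq α] (σ : Perm α) (l : List (Perm α))
    (hl : ∀ τ ∈ l, τ.IsSwap) :
    Nat.card (Quotient (SameCycle.setoid (σ * l.prod))) ≤
      Nat.card (Quotient (SameCycle.setoid σ)) + l.length := by
  induction l generalizing σ with
  | nil => simp
  | cons τ l ih =>
    obtain ⟨a, b, -, rfl⟩ := hl τ List.mem_cons_self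
    have := ih (σ * swap a b) fun τ hτ => hl τ (List.mem_cons_of_mem _ hτ)
    rw [List.prod_cons, ← mul_assoc, List.length_cons]
    have := card_quotient_sameCycle_mul_swap_le σ a b
    omega

theorem two_mul_card_quotient_sameCycle_le (σ : Perm α) (hσ : ∀ x, σ x ≠ x) :
    2 * Nat.card (Quotient (SameCycle.setoid σ)) ≤ Nat.card α := by
  have hout : Function.Injective (Quotient.out : Quotient (SameCycle.setoid σ) → α) :=
    Quotient.out_injective
  have hdisj (p q : Quotient (SameCycle.setoid σ)) : p.out ≠ σ q.out := by
    intro h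
    have hpq : p = q := by
      rw [← Quotient.out_eq p, ← Quotient.out_eq q, h]
      exact Quotient.sound (sameCycle_apply_left.2 (SameCycle.refl σ _))
    exact hσ _ (hpq ▸ h).symm
  simpa [two_mul] using
    Nat.card_le_card_of_injective _ (hout.sumElim (σ.injective.comp hout) hdisj)

end Equiv.Perm

theorem cycleCount_eq_card_quotient_sameCycle {n : ℕ} (σ : Equiv.Perm (Fin n)) :
    cycleCount σ = Nat.card (Quotient (Equiv.Perm.SameCycle.setoid σ)) := by
  rw [cycleCount, MulAction.orbitRel.Quotient, Equiv.Perm.orbitRel_zpowers_eq]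

theorem exists_isSwap_list_length_eq_transCount {n : ℕ} (σ : Equiv.Perm (Fin n)) :
    ∃ l : List (Equiv.Perm (Fin n)),
      l.length = transCount σ ∧ (∀ τ ∈ l, τ.IsSwap) ∧ l.prod = σ := by
  obtain ⟨l, hprod, hswap⟩ := (Equiv.Perm.truncSwapFactors σ).out
  exact Nat.sInf_mem (s := {k | ∃ l : List (Equiv.Perm (Fin n)),
    l.length = k ∧ (∀ τ ∈ l, τ.IsSwap) ∧ l.prod = σ}) ⟨_, l, rfl, hswap, hprod⟩

theorem cycleCount_mul_parity_swapping_le (t : ℕ) (α β : Equiv.Perm (Fin (2 * t)))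
    (hβ : ∀ x : Fin (2 * t), (β x : ℕ) % 2 ≠ (x : ℕ) % 2) :
    cycleCount (β * α) ≤ t + transCount α := by
  obtain ⟨l, hlen, hswap, rfl⟩ := exists_isSwap_list_length_eq_transCount α
  have hβ_free : ∀ x, β x ≠ x := fun x h => hβ x (by rw [h])
  have hβ_le := β.two_mul_card_quotient_sameCycle_le hβ_free
  rw [Nat.card_fin] at hβ_le
  rw [cycleCount_eq_card_quotient_sameCycle, ← hlen]
  have hprod := β.card_quotient_sameCycle_mul_prod_le l hswap
  omega
end

section
/- For any α ∈ S_{2t} and any β ∈ S_{2t} with β(x) and x of different parities for all x ∈ {1,...,2t}, one has c(α) + c(βα^{-1}) ≤ 3t, where c denotes the number of cycles (orbits, including fixed points). -/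
open Equiv Module MulAction

theorem Equiv.Perm.comp_zpow_eq_self {α β : Type*} {σ : Perm α} {v : α → β} (hv : v ∘ σ = v)
    (k : ℤ) : v ∘ ⇑(σ ^ k) = v := by
  have hv_inv : v ∘ ⇑σ⁻¹ = v := by
    conv_lhs => rw [← hv]
    rw [Function.comp_assoc, ← Perm.coe_mul, mul_inv_cancel, Perm.coe_one, Function.comp_id]
  induction k using Int.induction_on with
  | zero => rfl
  | succ k ih => rw [zpow_add_one, Perm.coe_mul, ← Function.comp_assoc, ih, hv]
  | pred k ih => rw [zpow_sub_one, Perm.coe_mul, ← Function.comp_assoc, ih, hv_inv]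

section FixedSubmodule

variable {K : Type*} [Field K]

theorem fixedSubmodule_funCongrLeft_eq_range {α : Type*} (σ : Perm α) :
    (LinearEquiv.funCongrLeft K K σ).fixedSubmodule =
      LinearMap.range (LinearMap.funLeft K K (Quotient.mk (orbitRel (Subgroup.zpowers σ) α))) := by
  ext v
  rw [LinearMap.mem_fixedSubmodule_iff, LinearEquiv.coe_coe, LinearEquiv.funCongrLeft_apply,
    LinearMap.mem_range]
  constructor
  · intro hv
    refine ⟨Quotient.lift v ?_, rfl⟩
    rintro _ b ⟨⟨_, k, rfl⟩, rfl⟩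
    exact congrFun (Perm.comp_zpow_eq_self hv k) b
  · rintro ⟨u, rfl⟩
    funext x
    exact congrArg u (Quotient.sound ⟨⟨σ, Subgroup.mem_zpowers σ⟩, rfl⟩)

theorem finrank_fixedSubmodule_funCongrLeft {n : ℕ} (σ : Perm (Fin n)) :
    finrank K (LinearEquiv.funCongrLeft K K σ).fixedSubmodule = cycleCount σ := by
  classical
  rw [fixedSubmodule_funCongrLeft_eq_range, LinearMap.finrank_range_of_inj
    (LinearMap.funLeft_injective_of_surjective _ _ _ Quotient.mk_surjective),
    finrank_fintype_fun_eq_card, cycleCount, Nat.card_eq_fintype_card]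

end FixedSubmodule

theorem cycleCount_add_cycleCount_le {n : ℕ} (σ τ : Perm (Fin n)) :
    cycleCount σ + cycleCount τ ≤ n + cycleCount (σ * τ) := by
  let e (π : Perm (Fin n)) := LinearEquiv.funCongrLeft ℚ ℚ π
  have h_mul : e τ * e σ = e (σ * τ) := rfl
  have h_fix := LinearEquiv.finrank_fixedSubmodule_add_le (e τ) (e σ)
  have h_sup : finrank ℚ ↥((e τ).fixedSubmodule ⊔ (e σ).fixedSubmodule) ≤ n :=
    (Submodule.finrank_le _).trans_eq (finrank_fin_fun ℚ)
  rw [h_mul] at h_fix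
  simp only [e, finrank_fixedSubmodule_funCongrLeft] at h_fix h_sup
  omega

theorem two_mul_card_orbitRel_quotient_le {G α : Type*} [Group G] [MulAction G α] [Finite α]
    (h : ∀ x : α, ∃ g : G, g • x ≠ x) : 2 * Nat.card (orbitRel.Quotient G α) ≤ Nat.card α := by
  classical
  have := Fintype.ofFinite α
  have := Fintype.ofFinite (orbitRel.Quotient G α)
  rw [Nat.card_eq_fintype_card, Nat.card_eq_fintype_card, ← Finset.card_univ, ← Finset.card_univ]
  refine Finset.mul_card_image_le_card_of_maps_to (f := Quotient.mk _) (fun _ _ ↦ Finset.mem_univ _)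
    2 fun ω _ ↦ ?_
  obtain ⟨g, hg⟩ := h ω.out
  have h_out : Quotient.mk _ ω.out = ω := Quotient.out_eq ω
  refine Finset.one_lt_card.mpr ⟨g • ω.out, ?_, ω.out, ?_, hg⟩
  · exact Finset.mem_filter.mpr
      ⟨Finset.mem_univ _, (Quotient.sound (mem_orbit ω.out g)).trans h_out⟩
  · exact Finset.mem_filter.mpr ⟨Finset.mem_univ _, h_out⟩

theorem two_mul_cycleCount_le {n : ℕ} {σ : Perm (Fin n)} (hσ : ∀ x, σ x ≠ x) :
    2 * cycleCount σ ≤ n :=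
  (two_mul_card_orbitRel_quotient_le fun x ↦ ⟨⟨σ, Subgroup.mem_zpowers σ⟩, hσ x⟩).trans_eq
    (Nat.card_fin n)

theorem cycleCount_add_cycleCount_le_three_t (t : ℕ) (α β : Equiv.Perm (Fin (2 * t)))
    (hβ : ∀ x : Fin (2 * t), (β x : ℕ) % 2 ≠ (x : ℕ) % 2) :
    cycleCount α + cycleCount (β * α⁻¹) ≤ 3 * t := by
  have h_free : ∀ x, β x ≠ x := fun x h ↦ hβ x (by rw [h])
  have h_sub := cycleCount_add_cycleCount_le (β * α⁻¹) α
  rw [inv_mul_cancel_right] at h_sub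
  have h_half := two_mul_cycleCount_le h_free
  omega
end

section
/- A permutation σ ∈ S_{2t} satisfies Val(σ) = 2t if and only if σ maps odd elements to odd elements and even elements to even elements, where Val(σ) is the sum over cycles c of σ of |odd(c) − even(c)|, with odd(c) and even(c) being the numbers of odd and even elements in the cycle c. -/
/-- The valuation `Val(σ) = Σ_{c ∈ C(σ)} |odd(c) − even(c)|`, summed over the orbits of
`⟨σ⟩` (including fixed points), where `odd(c)` and `even(c)` count odd and even elements
of the orbit `c`. Here elements of `Fin n` represent `{1, ..., n}` via `x ↦ x + 1`,
so `x : Fin n` is odd iff `(x : ℕ) % 2 = 0`. -/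
noncomputable def valPerm {n : ℕ} (σ : Equiv.Perm (Fin n)) : ℤ :=
  ∑ᶠ O : MulAction.orbitRel.Quotient (Subgroup.zpowers σ) (Fin n),
    |(Nat.card {x : Fin n // x ∈ O.orbit ∧ (x : ℕ) % 2 = 0} : ℤ) -
      (Nat.card {x : Fin n // x ∈ O.orbit ∧ (x : ℕ) % 2 = 1} : ℤ)|

/-! Each orbit contributes `|odd − even| ≤ odd + even`, and these orbit sizes add up to `2t`, so
`Val(σ) = 2t` exactly when every orbit consists of elements of a single parity. That means the
parity is invariant under `⟨σ⟩`, which for a cyclic group is invariance under its generator `σ`. -/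

open MulAction Finset

theorem abs_natCast_sub_natCast_le_add (a b : ℕ) : |(a : ℤ) - b| ≤ a + b := by
  rw [abs_le]; omega

theorem abs_natCast_sub_natCast_eq_add_iff (a b : ℕ) : |(a : ℤ) - b| = a + b ↔ a = 0 ∨ b = 0 := by
  rcases abs_cases ((a : ℤ) - b) with ⟨h, h'⟩ | ⟨h, h'⟩ <;> rw [h] <;> omega

namespace MulAction

variable {G α : Type*} [Group G] [MulAction G α]

theorem finsum_natCard_mem_orbit_and [Finite α] (P : α → Prop) :
    ∑ᶠ O : orbitRel.Quotient G α, Nat.card {x // x ∈ O.orbit ∧ P x} = Nat.card {x // P x} := by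
  have : Fintype (orbitRel.Quotient G α) := Fintype.ofFinite _
  rw [finsum_eq_sum_of_fintype, ← Nat.card_sigma]
  exact Nat.card_congr
    { toFun := fun y => ⟨y.2.1, y.2.2.2⟩
      invFun := fun x => ⟨Quotient.mk'' x.1, x.1, orbitRel.Quotient.mem_orbit.mpr rfl, x.2⟩
      left_inv := by
        rintro ⟨O, x, hx, -⟩
        obtain rfl := orbitRel.Quotient.mem_orbit.mp hx
        rfl
      right_inv := fun _ => rfl }

theorem natCard_mem_orbit_and_eq_zero_or_iff [Finite α] (P : α → Prop) (x : α) :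
    Nat.card {y // y ∈ orbit G x ∧ P y} = 0 ∨ Nat.card {y // y ∈ orbit G x ∧ ¬P y} = 0 ↔
      ∀ g : G, P (g • x) ↔ P x := by
  simp only [Finite.card_eq_zero_iff, isEmpty_subtype, not_and, mem_orbit_iff, forall_exists_index,
    forall_apply_eq_imp_iff, not_not]
  constructor
  · rintro (h | h) g
    · exact iff_of_false (h g) (one_smul G x ▸ h 1)
    · exact iff_of_true (h g) (one_smul G x ▸ h 1)
  · intro h
    by_cases hx : P x
    · exact .inr fun g => (h g).mpr hx
    · exact .inl fun g => (h g).not.mpr hx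

theorem finsum_abs_natCard_sub_natCard_eq_natCard_iff [Finite α] (P : α → Prop) :
    ∑ᶠ O : orbitRel.Quotient G α,
        |(Nat.card {x // x ∈ O.orbit ∧ P x} : ℤ) - Nat.card {x // x ∈ O.orbit ∧ ¬P x}| =
        Nat.card α ↔
      ∀ (g : G) (x : α), P (g • x) ↔ P x := by
  have : Fintype (orbitRel.Quotient G α) := Fintype.ofFinite _
  have hsum : ∑ O : orbitRel.Quotient G α,
      ((Nat.card {x // x ∈ O.orbit ∧ P x} : ℤ) + Nat.card {x // x ∈ O.orbit ∧ ¬P x}) =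
      Nat.card α := by
    classical
    rw [sum_add_distrib]
    simp only [← Nat.cast_sum, ← finsum_eq_sum_of_fintype, finsum_natCard_mem_orbit_and]
    rw [← Nat.cast_add, ← Nat.card_sum, Nat.card_congr (Equiv.sumCompl P)]
  rw [finsum_eq_sum_of_fintype, ← hsum,
    sum_eq_sum_iff_of_le fun O _ => abs_natCast_sub_natCast_le_add _ _, forall_comm]
  simp only [mem_univ, forall_const, abs_natCast_sub_natCast_eq_add_iff, Quotient.forall,
    orbitRel.Quotient.orbit_mk, natCard_mem_orbit_and_eq_zero_or_iff]

end MulAction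

theorem Equiv.Perm.forall_zpowers_smul_iff {α : Type*} (σ : Equiv.Perm α) (P : α → Prop) :
    (∀ (g : Subgroup.zpowers σ) (x : α), P (g • x) ↔ P x) ↔ ∀ x, P (σ x) ↔ P x := by
  refine ⟨fun h => h ⟨σ, Subgroup.mem_zpowers σ⟩, fun h => ?_⟩
  rintro ⟨_, k, rfl⟩ x
  change P ((σ ^ k) x) ↔ P x
  induction k using Int.induction_on generalizing x with
  | zero => rfl
  | succ k ih => rw [zpow_add_one, Equiv.Perm.mul_apply, ih, h]
  | pred k ih =>
    rw [zpow_sub_one, Equiv.Perm.mul_apply, ih, ← h, Equiv.Perm.coe_inv, Equiv.apply_symm_apply]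

theorem valPerm_eq_full_iff_parity_preserving (t : ℕ) (σ : Equiv.Perm (Fin (2 * t))) :
    valPerm σ = 2 * t ↔ ∀ x : Fin (2 * t), (σ x : ℕ) % 2 = (x : ℕ) % 2 := by
  set P : Fin (2 * t) → Prop := fun x => (x : ℕ) % 2 = 0
  have key := (finsum_abs_natCard_sub_natCard_eq_natCard_iff (G := Subgroup.zpowers σ) P).trans
    (σ.forall_zpowers_smul_iff P)
  simp only [Nat.mod_two_ne_zero, Nat.card_eq_fintype_card, Fintype.card_fin, Nat.cast_mul,
    Nat.cast_ofNat, P] at key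
  rw [valPerm, key]
  exact forall_congr' fun x => by omega
end

section
/- Let F_q be a finite field of characteristic p, and let d be a positive integer such that p does not divide d+2. For any s, x ∈ F_q^d with the polynomial identity in question nontrivial, and any x_{d+1}, x_{d+2} ∈ F_q with (x, x_{d+1}, x_{d+2}) ≠ 0, the equation Σ_{i=1}^{d} (s_i + x_i)(r + x_{d+1})^i + (r + x_{d+1})^{d+2} = Σ_{i=1}^{d} s_i r^i + r^{d+2} + x_{d+2} holds for at most d+1 values of r ∈ F_q. -/
open Polynomial Finset

lemma aux_add_pow (F : Type*) [Field F] (a : F) (n : ℕ) :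
    (X + C a) ^ n =
      (∑ k ∈ Finset.range n, C (a ^ (n - k) * (n.choose k : F)) * X ^ k) + X ^ n := by
  rw [add_pow, Finset.sum_range_succ]
  simp only [Nat.sub_self, pow_zero, one_mul, Nat.choose_self, Nat.cast_one, mul_one]
  congr 1
  apply Finset.sum_congr rfl
  intro k _
  rw [map_mul, map_pow, ← Polynomial.C_eq_natCast]
  ring

theorem amd_polynomial_roots_explicit (F : Type*) [Field F] [Fintype F] [DecidableEq F]
    (p : ℕ) [Fact p.Prime] [CharP F p] (d : ℕ) (hpd : ¬ p ∣ (d + 2))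
    (s x : Fin d → F) (x1 x2 : F) (hΔ : ¬(x = 0 ∧ x1 = 0 ∧ x2 = 0)) :
    (Finset.univ.filter fun r : F =>
      (∑ i : Fin d, (s i + x i) * (r + x1) ^ ((i : ℕ) + 1)) + (r + x1) ^ (d + 2) =
        (∑ i : Fin d, s i * r ^ ((i : ℕ) + 1)) + r ^ (d + 2) + x2).card ≤ d + 1 := by
  set P : F[X] :=
    (∑ i : Fin d, C (s i + x i) * (X + C x1) ^ ((i : ℕ) + 1)) + (X + C x1) ^ (d + 2)
      - (∑ i : Fin d, C (s i) * X ^ ((i : ℕ) + 1)) - X ^ (d + 2) - C x2 with hP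
  have heval : ∀ r : F, P.eval r =
      ((∑ i : Fin d, (s i + x i) * (r + x1) ^ ((i : ℕ) + 1)) + (r + x1) ^ (d + 2))
        - ((∑ i : Fin d, s i * r ^ ((i : ℕ) + 1)) + r ^ (d + 2) + x2) := by
    intro r
    simp [hP, eval_finset_sum]
    ring
  have hXC : (X + C x1 : F[X]).natDegree = 1 := natDegree_X_add_C x1
  have hpow : ∀ n : ℕ, ((X + C x1 : F[X]) ^ n).natDegree = n := by
    intro n; rw [natDegree_pow, hXC, mul_one]
  have hP2 : P = (∑ i : Fin d, C (s i + x i) * (X + C x1) ^ ((i : ℕ) + 1))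
      + (∑ k ∈ Finset.range (d + 2), C (x1 ^ (d + 2 - k) * ((d + 2).choose k : F)) * X ^ k)
      - (∑ i : Fin d, C (s i) * X ^ ((i : ℕ) + 1)) - C x2 := by
    rw [hP, aux_add_pow]; ring
  have hd1 : (∑ i : Fin d, C (s i + x i) * (X + C x1) ^ ((i : ℕ) + 1)).natDegree ≤ d := by
    refine natDegree_sum_le_of_forall_le _ _ fun i _ => ?_
    refine le_trans (natDegree_C_mul_le _ _) ?_
    rw [hpow]
    exact i.isLt
  have hd3 : (∑ i : Fin d, C (s i) * X ^ ((i : ℕ) + 1)).natDegree ≤ d := by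
    refine natDegree_sum_le_of_forall_le _ _ fun i _ => ?_
    refine le_trans (natDegree_C_mul_le _ _) ?_
    rw [natDegree_X_pow]
    exact i.isLt
  have hd2 : (∑ k ∈ Finset.range (d + 2),
      C (x1 ^ (d + 2 - k) * ((d + 2).choose k : F)) * X ^ k).natDegree ≤ d + 1 := by
    refine natDegree_sum_le_of_forall_le _ _ fun k hk => ?_
    refine le_trans (natDegree_C_mul_le _ _) ?_
    rw [natDegree_X_pow]
    exact Nat.lt_succ_iff.mp (Finset.mem_range.mp hk)
  have hdeg : P.natDegree ≤ d + 1 := by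
    rw [hP2]
    refine le_trans (natDegree_sub_le _ _) (max_le ?_ (by simp))
    refine le_trans (natDegree_sub_le _ _) (max_le ?_ (le_trans hd3 (Nat.le_succ d)))
    refine le_trans (natDegree_add_le _ _) (max_le (le_trans hd1 (Nat.le_succ d)) hd2)
  have hPne : P ≠ 0 := by
    by_cases hx1 : x1 = 0
    · subst hx1
      have hPsimp : P = (∑ i : Fin d, C (x i) * X ^ ((i : ℕ) + 1)) - C x2 := by
        rw [hP2]
        have h0 : ∑ k ∈ Finset.range (d + 2),
            C ((0:F) ^ (d + 2 - k) * (((d + 2).choose k : F))) * X ^ k = 0 := by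
          apply Finset.sum_eq_zero
          intro k hk
          rw [zero_pow (by simp at hk; omega : d + 2 - k ≠ 0)]
          simp
        rw [h0]
        simp only [map_zero, add_zero, map_add, add_mul, Finset.sum_add_distrib]
        ring
      push_neg at hΔ
      by_cases hx : x = 0
      · have hx2 : x2 ≠ 0 := hΔ hx rfl
        rw [hPsimp, hx]
        simpa using hx2
      · obtain ⟨i, hi⟩ := Function.ne_iff.mp hx
        intro hcon
        apply hi
        have := congrArg (fun q : F[X] => q.coeff ((i : ℕ) + 1)) hcon
        simp only [hPsimp, coeff_sub, finset_sum_coeff, coeff_C_mul, coeff_X_pow,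
          coeff_C, coeff_zero] at this
        rw [Finset.sum_eq_single i] at this
        · simpa using this
        · intro j _ hj
          have : (j : ℕ) ≠ (i : ℕ) := fun h => hj (Fin.ext h)
          simp [this, Nat.add_right_cancel_iff, Ne.symm this]
        · simp
    · intro hcon
      have hc : P.coeff (d + 1) = x1 * (d + 2 : F) := by
        rw [hP2]
        simp only [coeff_sub, coeff_add]
        rw [coeff_eq_zero_of_natDegree_lt (lt_of_le_of_lt hd1 (Nat.lt_succ_self d)),
          coeff_eq_zero_of_natDegree_lt (lt_of_le_of_lt hd3 (Nat.lt_succ_self d))]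
        have hCx2 : (C x2).coeff (d + 1) = 0 := by
          rw [coeff_C]; simp
        rw [hCx2]
        rw [finset_sum_coeff]
        rw [Finset.sum_eq_single (d + 1)]
        · have hch : (d + 2).choose (d + 1) = d + 2 := by
            rw [show d + 2 = (d + 1) + 1 from rfl, Nat.choose_succ_self_right]
          have h1 : d + 2 - (d + 1) = 1 := by omega
          rw [coeff_C_mul, coeff_X_pow, if_pos rfl, mul_one, h1, pow_one, hch]
          push_cast
          ring
        · intro k _ hk
          rw [coeff_C_mul, coeff_X_pow, if_neg (Ne.symm hk), mul_zero]
        · intro h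
          exact absurd (Finset.mem_range.mpr (by omega)) h
      have hne : (x1 * (d + 2 : F)) ≠ 0 := by
        apply mul_ne_zero hx1
        have : ((d + 2 : ℕ) : F) ≠ 0 := by
          rw [Ne, CharP.cast_eq_zero_iff F p]
          exact hpd
        simpa using this
      rw [hcon, coeff_zero] at hc
      exact hne hc.symm
  have hsub : (Finset.univ.filter fun r : F =>
      (∑ i : Fin d, (s i + x i) * (r + x1) ^ ((i : ℕ) + 1)) + (r + x1) ^ (d + 2) =
        (∑ i : Fin d, s i * r ^ ((i : ℕ) + 1)) + r ^ (d + 2) + x2) ⊆ P.roots.toFinset := by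
    intro r hr
    simp only [Finset.mem_filter, Finset.mem_univ, true_and] at hr
    rw [Multiset.mem_toFinset, mem_roots hPne]
    rw [IsRoot, heval, hr]; ring
  calc _ ≤ P.roots.toFinset.card := Finset.card_le_card hsub
    _ ≤ Multiset.card P.roots := P.roots.toFinset_card_le
    _ ≤ P.natDegree := P.card_roots'
    _ ≤ d + 1 := hdeg
end

section
/- Let F_q be a finite field of characteristic p with p not dividing d+2, and define f(s,r) = Σ_{i=1}^d s_i r^i + r^{d+2} for s ∈ F_q^d, r ∈ F_q. Then for every s ∈ F_q^d and every nonzero Δ = (x_1,...,x_d, x_{d+1}, x_{d+2}) ∈ F_q^{d+2}, the number of r ∈ F_q such that f(s + x_{1:d}, r + x_{d+1}) = f(s, r) + x_{d+2} is at most d+1. -/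
/-- The AMD authentication function `f(s, r) = Σ_{i=1}^d s_i r^i + r^{d+2}`. -/
def amdFun {F : Type*} [Field F] (d : ℕ) (s : Fin d → F) (r : F) : F :=
  (∑ i : Fin d, s i * r ^ ((i : ℕ) + 1)) + r ^ (d + 2)

open Polynomial in
theorem amd_tamper_count_le (F : Type*) [Field F] [Fintype F] [DecidableEq F]
    (p : ℕ) [Fact p.Prime] [CharP F p] (d : ℕ) (hpd : ¬ p ∣ (d + 2))
    (s x : Fin d → F) (x1 x2 : F) (hΔ : ¬(x = 0 ∧ x1 = 0 ∧ x2 = 0)) :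
    (Finset.univ.filter fun r : F =>
      amdFun d (s + x) (r + x1) = amdFun d s r + x2).card ≤ d + 1 := by
  classical
  set P : F[X] :=
    (∑ i : Fin d, C ((s + x) i) * (X + C x1) ^ ((i : ℕ) + 1)) + (X + C x1) ^ (d + 2)
      - ((∑ i : Fin d, C (s i) * X ^ ((i : ℕ) + 1)) + X ^ (d + 2) + C x2) with hPdef
  -- coefficient computation
  have hcoeff : ∀ k : ℕ, P.coeff k =
      (∑ i : Fin d, (s i + x i) * (x1 ^ ((i : ℕ) + 1 - k) * (((i : ℕ) + 1).choose k : F)))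
        + x1 ^ (d + 2 - k) * ((d + 2).choose k : F)
        - ((∑ i : Fin d, s i * (if k = (i : ℕ) + 1 then (1:F) else 0))
            + (if k = d + 2 then (1:F) else 0) + (if k = 0 then x2 else 0)) := by
    intro k
    simp only [hPdef, coeff_sub, coeff_add, finset_sum_coeff, Pi.add_apply, coeff_C_mul,
      coeff_X_add_C_pow, coeff_X_pow, coeff_C]
  -- every r in the filter is a root of P
  have hroot : ∀ r ∈ (Finset.univ.filter fun r : F =>
      amdFun d (s + x) (r + x1) = amdFun d s r + x2), P.IsRoot r := by
    intro r hr
    rw [Finset.mem_filter] at hr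
    have h := hr.2
    simp only [amdFun, Pi.add_apply] at h
    simp only [IsRoot, hPdef, eval_sub, eval_add, eval_pow, eval_finset_sum, eval_mul,
      eval_C, eval_X]
    rw [sub_eq_zero]
    simpa using h
  -- degree bound
  have hdeg : P.natDegree ≤ d + 1 := by
    apply natDegree_le_iff_coeff_eq_zero.mpr
    intro k hk
    rw [hcoeff k]
    have hs1 : (∑ i : Fin d, (s i + x i) *
        (x1 ^ ((i : ℕ) + 1 - k) * (((i : ℕ) + 1).choose k : F))) = 0 :=
      Finset.sum_eq_zero fun i _ => by
        rw [Nat.choose_eq_zero_of_lt (by omega), Nat.cast_zero]; ring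
    have hs2 : (∑ i : Fin d, s i * (if k = (i : ℕ) + 1 then (1:F) else 0)) = 0 :=
      Finset.sum_eq_zero fun i _ => by rw [if_neg (by omega)]; ring
    rcases eq_or_ne k (d + 2) with rfl | hne
    · rw [hs1, hs2, if_pos rfl, if_neg (by omega), Nat.sub_self, pow_zero, Nat.choose_self]
      norm_num
    · rw [hs1, hs2, if_neg hne, if_neg (by omega),
        Nat.choose_eq_zero_of_lt (by omega), Nat.cast_zero]
      ring
  -- nonzeroness
  have hP0 : P ≠ 0 := by
    rcases eq_or_ne x1 0 with rfl | hx1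
    · -- x1 = 0 case
      rcases eq_or_ne x2 0 with rfl | hx2
      · have hx : x ≠ 0 := fun h => hΔ ⟨h, rfl, rfl⟩
        obtain ⟨i, hi⟩ := Function.ne_iff.mp hx
        simp only [Pi.zero_apply] at hi
        intro h
        have hc := hcoeff ((i : ℕ) + 1)
        rw [h, coeff_zero] at hc
        have hsum1 : (∑ j : Fin d, (s j + x j) *
            ((0:F) ^ ((j : ℕ) + 1 - ((i : ℕ) + 1)) * (((j : ℕ) + 1).choose ((i : ℕ) + 1) : F)))
            = s i + x i := by
          rw [Finset.sum_eq_single i]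
          · simp
          · intro j _ hj
            rcases lt_or_gt_of_ne (fun hc : (j:ℕ) = (i:ℕ) => hj (Fin.ext hc)) with hlt | hgt
            · rw [Nat.choose_eq_zero_of_lt (by omega), Nat.cast_zero]; ring
            · rw [zero_pow (by omega)]; ring
          · simp
        have hsum2 : (∑ j : Fin d, s j * (if (i : ℕ) + 1 = (j : ℕ) + 1 then (1:F) else 0))
            = s i := by
          rw [Finset.sum_eq_single i]
          · simp
          · intro j _ hj
            rw [if_neg (fun hc => hj (Fin.ext (by omega)))]; ring
          · simp
        rw [hsum1, hsum2, zero_pow (by omega : d + 2 - ((i:ℕ)+1) ≠ 0),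
          if_neg (by omega : ¬ (i:ℕ) + 1 = d + 2), if_neg (by omega : ¬ (i:ℕ) + 1 = 0)] at hc
        apply hi
        linear_combination -hc
      · intro h
        have hc := hcoeff 0
        rw [h, coeff_zero] at hc
        have hsum1 : (∑ j : Fin d, (s j + x j) *
            ((0:F) ^ ((j : ℕ) + 1 - 0) * (((j : ℕ) + 1).choose 0 : F))) = 0 :=
          Finset.sum_eq_zero fun j _ => by rw [zero_pow (by omega)]; ring
        have hsum2 : (∑ j : Fin d, s j * (if 0 = (j : ℕ) + 1 then (1:F) else 0)) = 0 :=
          Finset.sum_eq_zero fun j _ => by rw [if_neg (by omega)]; ring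
        rw [hsum1, hsum2, zero_pow (by omega : d + 2 - 0 ≠ 0),
          if_neg (by omega : ¬ (0:ℕ) = d + 2), if_pos rfl] at hc
        apply hx2
        linear_combination hc
    · -- x1 ≠ 0 case: coeff (d+1) = (d+2) * x1 ≠ 0
      intro h
      have hc := hcoeff (d + 1)
      rw [h, coeff_zero] at hc
      have hsum1 : (∑ i : Fin d, (s i + x i) *
          (x1 ^ ((i : ℕ) + 1 - (d + 1)) * (((i : ℕ) + 1).choose (d + 1) : F))) = 0 :=
        Finset.sum_eq_zero fun i _ => by
          rw [Nat.choose_eq_zero_of_lt (by omega), Nat.cast_zero]; ring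
      have hsum2 : (∑ i : Fin d, s i * (if d + 1 = (i : ℕ) + 1 then (1:F) else 0)) = 0 :=
        Finset.sum_eq_zero fun i _ => by rw [if_neg (by omega)]; ring
      rw [hsum1, hsum2, if_neg (by omega : ¬ d + 1 = d + 2), if_neg (by omega : ¬ d + 1 = 0),
        show d + 2 - (d + 1) = 1 by omega, pow_one, Nat.choose_succ_self_right] at hc
      have hcast : ((d + 2 : ℕ) : F) ≠ 0 := by
        rw [Ne, CharP.cast_eq_zero_iff F p]
        exact hpd
      have : x1 * ((d + 2 : ℕ) : F) = 0 := by linear_combination -hc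
      rcases mul_eq_zero.mp this with h' | h'
      · exact hx1 h'
      · exact hcast h'
  -- conclude
  calc (Finset.univ.filter fun r : F =>
      amdFun d (s + x) (r + x1) = amdFun d s r + x2).card
      ≤ P.natDegree := by
        apply card_le_degree_of_subset_roots
        intro r hr
        rw [mem_roots hP0]
        exact hroot r (by simpa using hr)
    _ ≤ d + 1 := hdeg
end
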